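/- Let A be a commutative associative unital ℂ-algebra. For each pair (k,l) of natural numbers let m_{k,l} : A × A → A be a ℂ-bilinear map, with m_{0,0}(a,b) = ab the given product, and suppose the two-parameter formal deformation m_{t,h} = Σ_{k,l} t^k h^l m_{k,l} is associative coefficientwise: for every (p,q) and all a, b, c ∈ A, Σ_{(k₁,l₁)+(k₂,l₂)=(p,q)} [ m_{k₁,l₁}(m_{k₂,l₂}(a,b), c) − m_{k₁,l₁}(a, m_{k₂,l₂}(b,c)) ] = 0. Define v(a,b) = m_{1,0}(a,b) − m_{1,0}(b,a) and p(a,b) = m_{0,1}(a,b) − m_{0,1}(b,a). Then v and p are biderivations (f(ab,c) = a f(b,c) + f(a,c) b), each satisfies the Jacobi identity (f(f(a,b),c) + f(f(b,c),a) + f(f(c,a),b) = 0), and they are compatible: v(p(a,b),c) + p(v(a,b),c) + v(p(b,c),a) + p(v(b,c),a) + v(p(c,a),b) + p(v(c,a),b) = 0 for all a, b, c ∈ A. -/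

import Mathlib

/-! Write `Φ(f, g)(a, b, c) = f(g(a, b), c) - f(a, g(b, c))` and `δμ` for the Hochschild
coboundary. The coefficients of associativity of `m_{t,h}` in degrees `(1,0)`, `(2,0)` and
`(1,1)` say `δm₁₀ = 0`, `Φ(m₁₀, m₁₀) = δm₂₀` and `Φ(m₁₀, m₀₁) + Φ(m₀₁, m₁₀) = δm₁₁`; swapping
the two parameters gives the same for `m₀₁`. The first makes the antisymmetrization of `m₁₀`
a biderivation. For the others, take the alternating sum over the six orderings of
`(a, b, c)`: it kills every Hochschild coboundary because `A` is commutative, and it turns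
`Φ(f, g)` into the cyclic sum of `[f, [g, a, b], c]` for the antisymmetrized brackets, which
gives the Jacobi identities and the compatibility. -/

namespace Stmt6

open Finset

section Bilinear

variable {R M : Type*} [CommSemiring R] [AddCommGroup M] [Module R M]

def associator (f g : M →ₗ[R] M →ₗ[R] M) (a b c : M) : M :=
  f (g a b) c - f a (g b c)

def alternatingSum (F : M → M → M → M) (a b c : M) : M :=
  F a b c - F b a c - F a c b - F c b a + F b c a + F c a b

theorem alternatingSum_add (F G : M → M → M → M) :
    alternatingSum (F + G) = alternatingSum F + alternatingSum G := by
  funext a b c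
  simp only [alternatingSum, Pi.add_apply]
  abel

theorem alternatingSum_associator (f g : M →ₗ[R] M →ₗ[R] M) (a b c : M) :
    alternatingSum (associator f g) a b c =
      (f - f.flip) ((g - g.flip) a b) c + (f - f.flip) ((g - g.flip) b c) a +
        (f - f.flip) ((g - g.flip) c a) b := by
  simp only [alternatingSum, associator, LinearMap.sub_apply, LinearMap.flip_apply, map_sub]
  abel

end Bilinear

section Hochschild

variable {R A : Type*} [CommSemiring R] [CommRing A] [Algebra R A]

def hochschildCoboundary (μ : A →ₗ[R] A →ₗ[R] A) (a b c : A) : A :=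
  a * μ b c - μ (a * b) c + μ a (b * c) - μ a b * c

theorem associator_mul_add_associator_mul (μ : A →ₗ[R] A →ₗ[R] A) (a b c : A) :
    associator μ (LinearMap.mul R A) a b c + associator (LinearMap.mul R A) μ a b c =
      -hochschildCoboundary μ a b c := by
  simp only [associator, hochschildCoboundary, LinearMap.mul_apply']
  ring

theorem sub_flip_mul_left {μ : A →ₗ[R] A →ₗ[R] A} (hμ : hochschildCoboundary μ = 0)
    (a b c : A) : (μ - μ.flip) (a * b) c = a * (μ - μ.flip) b c + (μ - μ.flip) a c * b := by
  have h x y z : hochschildCoboundary μ x y z = 0 := congrFun₃ hμ x y z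
  simp only [hochschildCoboundary, LinearMap.sub_apply, LinearMap.flip_apply] at h ⊢
  linear_combination (norm := ring_nf) h a c b - h a b c - h c a b

theorem alternatingSum_hochschildCoboundary (μ : A →ₗ[R] A →ₗ[R] A) :
    alternatingSum (hochschildCoboundary μ) = 0 := by
  funext a b c
  simp only [alternatingSum, hochschildCoboundary, Pi.zero_apply]
  ring_nf

theorem sub_flip_jacobi {f μ : A →ₗ[R] A →ₗ[R] A}
    (h : associator f f = hochschildCoboundary μ) (a b c : A) :
    (f - f.flip) ((f - f.flip) a b) c + (f - f.flip) ((f - f.flip) b c) a +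
      (f - f.flip) ((f - f.flip) c a) b = 0 := by
  rw [← alternatingSum_associator, h, alternatingSum_hochschildCoboundary]
  rfl

theorem sub_flip_compatible {f g μ : A →ₗ[R] A →ₗ[R] A}
    (h : associator f g + associator g f = hochschildCoboundary μ) (a b c : A) :
    (f - f.flip) ((g - g.flip) a b) c + (g - g.flip) ((f - f.flip) a b) c +
      (f - f.flip) ((g - g.flip) b c) a + (g - g.flip) ((f - f.flip) b c) a +
        (f - f.flip) ((g - g.flip) c a) b + (g - g.flip) ((f - f.flip) c a) b = 0 := by
  have key := congrFun₃ (congrArg alternatingSum h) a b c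
  rw [alternatingSum_hochschildCoboundary, alternatingSum_add] at key
  simp only [Pi.add_apply, Pi.zero_apply, alternatingSum_associator] at key
  linear_combination key

end Hochschild

section Deformation

variable {R A : Type*} [CommSemiring R] [CommRing A] [Algebra R A]

def IsAssociativeDeformation (m : ℕ → ℕ → A →ₗ[R] A →ₗ[R] A) : Prop :=
  ∀ (p q : ℕ) (a b c : A), ∑ u ∈ antidiagonal p, ∑ w ∈ antidiagonal q,
    associator (m u.1 w.1) (m u.2 w.2) a b c = 0

namespace IsAssociativeDeformation

variable {m : ℕ → ℕ → A →ₗ[R] A →ₗ[R] A}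

theorem swap (hm : IsAssociativeDeformation m) : IsAssociativeDeformation fun k l ↦ m l k :=
  fun p q a b c ↦ by rw [sum_comm]; exact hm q p a b c

variable (hm : IsAssociativeDeformation m) (hmul : m 0 0 = LinearMap.mul R A)
include hm hmul

theorem hochschildCoboundary_one_zero : hochschildCoboundary (m 1 0) = 0 := by
  funext a b c
  have h := hm 1 0 a b c
  simp only [Nat.sum_antidiagonal_succ, Nat.antidiagonal_zero,
    sum_singleton, zero_add, hmul] at h
  rw [Pi.zero_apply, Pi.zero_apply, Pi.zero_apply]
  linear_combination associator_mul_add_associator_mul (m 1 0) a b c - h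

theorem associator_one_zero : associator (m 1 0) (m 1 0) = hochschildCoboundary (m 2 0) := by
  funext a b c
  have h := hm 2 0 a b c
  simp only [Nat.sum_antidiagonal_succ, Nat.antidiagonal_zero,
    sum_singleton, zero_add, one_add_one_eq_two, hmul] at h
  linear_combination h - associator_mul_add_associator_mul (m 2 0) a b c

theorem associator_one_zero_add_associator_zero_one :
    associator (m 1 0) (m 0 1) + associator (m 0 1) (m 1 0) = hochschildCoboundary (m 1 1) := by
  funext a b c
  have h := hm 1 1 a b c
  simp only [Nat.sum_antidiagonal_succ, Nat.antidiagonal_zero,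
    sum_singleton, zero_add, hmul] at h
  rw [Pi.add_apply, Pi.add_apply, Pi.add_apply]
  linear_combination h - associator_mul_add_associator_mul (m 1 1) a b c

end IsAssociativeDeformation

end Deformation

theorem two_parameter_quantization_brackets_compatible
    (A : Type) [CommRing A] [Algebra ℂ A]
    (m : ℕ → ℕ → A →ₗ[ℂ] A →ₗ[ℂ] A)
    (hm00 : ∀ a b : A, m 0 0 a b = a * b)
    (hassoc : ∀ (p q : ℕ) (a b c : A),
      ∑ u ∈ Finset.HasAntidiagonal.antidiagonal p, ∑ w ∈ Finset.HasAntidiagonal.antidiagonal q,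
        (m u.1 w.1 (m u.2 w.2 a b) c - m u.1 w.1 a (m u.2 w.2 b c)) = 0)
    (v p : A → A → A)
    (hv : ∀ a b : A, v a b = m 1 0 a b - m 1 0 b a)
    (hp : ∀ a b : A, p a b = m 0 1 a b - m 0 1 b a) :
    (∀ a b c : A, v (a * b) c = a * v b c + v a c * b) ∧
    (∀ a b c : A, p (a * b) c = a * p b c + p a c * b) ∧
    (∀ a b c : A, v (v a b) c + v (v b c) a + v (v c a) b = 0) ∧
    (∀ a b c : A, p (p a b) c + p (p b c) a + p (p c a) b = 0) ∧
    (∀ a b c : A,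
      v (p a b) c + p (v a b) c + v (p b c) a + p (v b c) a +
        v (p c a) b + p (v c a) b = 0) := by
  have hdef : IsAssociativeDeformation m := hassoc
  have hmul : m 0 0 = LinearMap.mul ℂ A := LinearMap.ext₂ hm00
  obtain rfl : v = fun a b ↦ (m 1 0 - (m 1 0).flip) a b := by
    funext a b
    simp [hv]
  obtain rfl : p = fun a b ↦ (m 0 1 - (m 0 1).flip) a b := by
    funext a b
    simp [hp]
  exact ⟨sub_flip_mul_left (hdef.hochschildCoboundary_one_zero hmul),
    sub_flip_mul_left (hdef.swap.hochschildCoboundary_one_zero hmul),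
    sub_flip_jacobi (hdef.associator_one_zero hmul),
    sub_flip_jacobi (hdef.swap.associator_one_zero hmul),
    sub_flip_compatible (hdef.associator_one_zero_add_associator_zero_one hmul)⟩

end Stmt6
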